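/- Suppose the augmented square matrix M = [[A, H],[Ψ^T, -I]] (with A n×n, H and Ψ n×p) satisfies: the columns of Ψ span the kernel of A, the columns of H are linearly independent, range(H) ∩ range(A) = {0}, and n ≥ p with rank(A) = n - p. Then M is invertible. -/
import Mathlib


open Matrix

/-- If the columns of `Ψ` span the kernel of `A`, the columns of `H` are linearly
independent, `range H ∩ range A = {0}`, `p ≤ n` and `rank A = n - p`, then the augmented
matrix `[[A, H],[Ψᵀ, -I]]` is invertible. -/
theorem augmented_system_invertible
    {n p : ℕ}
    (A : Matrix (Fin n) (Fin n) ℝ)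
    (H Ψ : Matrix (Fin n) (Fin p) ℝ)
    (hker : LinearMap.ker A.mulVecLin = LinearMap.range Ψ.mulVecLin)
    (hH : LinearMap.ker H.mulVecLin = ⊥)
    (hdisj : LinearMap.range H.mulVecLin ⊓ LinearMap.range A.mulVecLin = ⊥)
    (hpn : p ≤ n)
    (hrank : A.rank = n - p) :
    IsUnit (fromBlocks A H Ψᵀ (-1 : Matrix (Fin p) (Fin p) ℝ)) := by
  rw [← Matrix.mulVec_injective_iff_isUnit]
  set M := fromBlocks A H Ψᵀ (-1 : Matrix (Fin p) (Fin p) ℝ) with hM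
  have hinj : ∀ v, M.mulVec v = 0 → v = 0 := by
    intro v hv
    set x : Fin n → ℝ := v ∘ Sum.inl with hx
    set y : Fin p → ℝ := v ∘ Sum.inr with hy
    have hv' : v = Sum.elim x y := by ext (i | i) <;> rfl
    rw [hv', hM, Matrix.fromBlocks_mulVec] at hv
    have h1 : A.mulVec x + H.mulVec y = 0 := by
      funext i
      simpa using congrFun hv (Sum.inl i)
    have h2 : Ψᵀ.mulVec x = y := by
      funext i
      have := congrFun hv (Sum.inr i)
      simp [Matrix.neg_mulVec] at this
      linarith
    -- H y ∈ range H ⊓ range A, hence H y = 0 and y = 0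
    have hAx : A.mulVec x = -(H.mulVec y) := eq_neg_of_add_eq_zero_left h1
    have hmem : H.mulVec y ∈ LinearMap.range H.mulVecLin ⊓ LinearMap.range A.mulVecLin :=
      ⟨⟨y, rfl⟩, ⟨-x, by simp [Matrix.mulVecLin_apply, Matrix.mulVec_neg, hAx]⟩⟩
    rw [hdisj] at hmem
    have hHy : H.mulVec y = 0 := hmem
    have hy0 : y = 0 := by
      have : y ∈ LinearMap.ker H.mulVecLin := hHy
      simpa [hH] using this
    -- A x = 0, so x ∈ range Ψ
    have hAx0 : A.mulVec x = 0 := by simp [hAx, hHy]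
    have hxr : x ∈ LinearMap.range Ψ.mulVecLin := by
      rw [← hker]; exact hAx0
    obtain ⟨z, hz⟩ := hxr
    rw [Matrix.mulVecLin_apply] at hz
    have hΨTx : Ψᵀ.mulVec x = 0 := by rw [h2, hy0]
    have hxx : x ⬝ᵥ x = 0 := by
      have : x ⬝ᵥ x = x ⬝ᵥ Ψ.mulVec z := by rw [hz]
      rw [this, Matrix.dotProduct_mulVec, ← Matrix.mulVec_transpose, hΨTx]
      simp
    have hx0 : x = 0 := by
      rwa [dotProduct_self_eq_zero] at hxx
    rw [hv', hx0, hy0]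
    funext i
    cases i <;> simp
  intro v w hvw
  have : M.mulVec (v - w) = 0 := by
    rw [Matrix.mulVec_sub, hvw, sub_self]
  have := hinj _ this
  exact sub_eq_zero.mp this
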